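/- arXiv:2512.19597 — 4 statements merged into one kernel-verified Lean document; each statement's English description precedes it below -/
import Mathlib

section
/- Let V be a vector space of dimension at least n, and let g_1, ..., g_n be invertible linear maps on V with rank(g_i - 1) ≤ 1 for every i, such that the product g_1 g_2 ⋯ g_n equals the scalar μ · id. Then either μ = 1, or det(g_i) ≠ 1 and μ is an eigenvalue of each g_i (indeed det(g_i)'s nontrivial eigenvalue is μ for all i). -/
/-! Suppose `μ ≠ 1` and fix `i`. The `n - 1 < dim V` spaces `ker (g j - 1)`, `j ≠ i`, have
codimension at most one, so they share a vector `v ≠ 0`. Writing the product as `A * g i * B`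
with `A` and `B` fixing `v` and `A` invertible gives `g i v = μ • v`. Then `range (g i - 1)` is
the line `K ∙ v`, so `g i` acts as `μ` on that line and as the identity on `V ⧸ K ∙ v`,
whence `det (g i) = μ`. -/

open Module Submodule

section DivisionRing

variable {K V : Type*} [DivisionRing K] [AddCommGroup V] [Module K V] [FiniteDimensional K V]

theorem LinearMap.finrank_le_finrank_ker_add_one {W : Type*} [AddCommGroup W] [Module K W]
    {f : V →ₗ[K] W} (hf : f.rank ≤ 1) : finrank K V ≤ finrank K (LinearMap.ker f) + 1 := by
  have hrange : finrank K (LinearMap.range f) ≤ 1 := finrank_le_of_rank_le (by exact_mod_cast hf)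
  have := f.finrank_range_add_finrank_ker
  omega

theorem Submodule.finrank_le_finrank_biInf_add_card {ι : Type*} [DecidableEq ι]
    (W : ι → Submodule K V) (s : Finset ι)
    (hW : ∀ i ∈ s, finrank K V ≤ finrank K (W i) + 1) :
    finrank K V ≤ finrank K ↥(⨅ i ∈ s, W i) + s.card := by
  induction s using Finset.induction with
  | empty => rw [show (⨅ i ∈ (∅ : Finset ι), W i) = ⊤ by simp, finrank_top]; simp
  | insert a s ha ih =>
    rw [Finset.iInf_insert, Finset.card_insert_of_notMem ha]
    have hsup := Submodule.finrank_sup_add_finrank_inf_eq (W a) (⨅ i ∈ s, W i)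
    have := (W a ⊔ ⨅ i ∈ s, W i).finrank_le
    have := hW a (Finset.mem_insert_self a s)
    have := ih fun i hi => hW i (Finset.mem_insert_of_mem hi)
    omega

theorem Module.End.exists_ne_zero_forall_apply_eq_self {ι : Type*} (g : ι → End K V)
    (s : Finset ι) (hrank : ∀ i ∈ s, (g i - 1).rank ≤ 1) (hs : s.card < finrank K V) :
    ∃ v ≠ (0 : V), ∀ i ∈ s, g i v = v := by
  classical
  have hbound := Submodule.finrank_le_finrank_biInf_add_card (fun i => LinearMap.ker (g i - 1)) s
    fun i hi => LinearMap.finrank_le_finrank_ker_add_one (hrank i hi)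
  have hne : (⨅ i ∈ s, LinearMap.ker (g i - 1)) ≠ ⊥ :=
    Submodule.one_le_finrank_iff.mp (by omega)
  obtain ⟨v, hv, hv0⟩ := Submodule.exists_mem_ne_zero_of_ne_bot hne
  refine ⟨v, hv0, fun i hi => ?_⟩
  have : (g i - 1) v = 0 := (mem_iInf _).mp ((mem_iInf _).mp hv i) hi
  rwa [LinearMap.sub_apply, one_apply, sub_eq_zero] at this

theorem Module.End.range_sub_one_eq_span_singleton {f : End K V} (hf : (f - 1).rank ≤ 1)
    {μ : K} (hμ : μ ≠ 1) {v : V} (hv : v ≠ 0) (hfv : f v = μ • v) :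
    LinearMap.range (f - 1) = K ∙ v := by
  have hfv' : (f - 1) v = (μ - 1) • v := by
    rw [LinearMap.sub_apply, one_apply, hfv, sub_smul, one_smul]
  have hmem : v ∈ LinearMap.range (f - 1) := ⟨(μ - 1)⁻¹ • v, by
    rw [map_smul, hfv', smul_smul, inv_mul_cancel₀ (sub_ne_zero.mpr hμ), one_smul]⟩
  refine (eq_of_le_of_finrank_le ((span_singleton_le_iff_mem _ _).mpr hmem) ?_).symm
  rw [finrank_span_singleton hv]
  exact finrank_le_of_rank_le (by exact_mod_cast hf)

end DivisionRing

theorem Module.End.det_eq_of_rank_sub_one_le_one {K V : Type*} [Field K] [AddCommGroup V]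
    [Module K V] [FiniteDimensional K V] {f : End K V} (hf : (f - 1).rank ≤ 1)
    {μ : K} (hμ : μ ≠ 1) {v : V} (hv : v ≠ 0) (hfv : f v = μ • v) :
    LinearMap.det f = μ := by
  have hL : (K ∙ v) ≤ (K ∙ v).comap f := by
    rw [span_singleton_le_iff_mem, mem_comap, hfv]
    exact smul_mem _ _ (mem_span_singleton_self v)
  have hres : f.restrict (p := K ∙ v) (q := K ∙ v) hL = μ • LinearMap.id := by
    ext ⟨x, hx⟩
    obtain ⟨c, rfl⟩ := mem_span_singleton.mp hx
    simp [hfv, smul_comm c μ]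
  have hquot : (K ∙ v).mapQ (K ∙ v) f hL = LinearMap.id := by
    refine Submodule.linearMap_qext _ (LinearMap.ext fun x => ?_)
    simp only [LinearMap.coe_comp, Function.comp_apply, mkQ_apply, mapQ_apply, LinearMap.id_comp]
    rw [Submodule.Quotient.eq, ← range_sub_one_eq_span_singleton hf hμ hv hfv]
    exact ⟨x, rfl⟩
  rw [LinearMap.det_eq_det_mul_det _ f hL, hres, hquot, LinearMap.det_smul, LinearMap.det_id,
    LinearMap.det_id, finrank_span_singleton hv]
  simp

section CommSemiring

variable {R M : Type*} [CommSemiring R] [AddCommMonoid M] [Module R M]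

theorem Module.End.list_prod_apply_eq_self {l : List (End R M)} {v : M}
    (h : ∀ f ∈ l, f v = v) : l.prod v = v :=
  (MulAction.stabilizerSubmonoid (End R M) v).list_prod_mem h

theorem Module.End.apply_eq_smul_of_list_ofFn_prod_eq_smul {n : ℕ} {g : Fin n → End R M}
    (hunit : ∀ i, IsUnit (g i)) {μ : R} (hprod : (List.ofFn g).prod = μ • 1) (i : Fin n)
    {v : M} (hv : ∀ j ≠ i, g j v = v) : g i v = μ • v := by
  set l := List.ofFn g
  have hil : (i : ℕ) < l.length := by simp [l]
  have hsplit : (l.take i).prod * (g i * (l.drop (i + 1)).prod) = μ • 1 := by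
    rw [← List.prod_cons, ← hprod, ← List.prod_take_mul_prod_drop l i,
      List.drop_eq_getElem_cons hil, List.getElem_ofFn]
  have hA : (l.take i).prod v = v := list_prod_apply_eq_self fun f hf => by
    obtain ⟨k, hk, rfl⟩ := List.mem_take_iff_getElem.mp hf
    rw [List.getElem_ofFn]
    exact hv _ (Fin.ne_of_val_ne (by simp at hk ⊢; omega))
  have hB : (l.drop (i + 1)).prod v = v := list_prod_apply_eq_self fun f hf => by
    obtain ⟨k, hk, rfl⟩ := List.mem_drop_iff_getElem.mp hf
    rw [List.getElem_ofFn]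
    exact hv _ (Fin.ne_of_val_ne (by simp; omega))
  have hAinj : Function.Injective (l.take i).prod :=
    ((isUnit_iff _).mp (List.prod_isUnit fun f hf => by
      obtain ⟨j, rfl⟩ := List.mem_ofFn.mp (List.take_subset _ _ hf)
      exact hunit j)).injective
  apply hAinj
  have := LinearMap.congr_fun hsplit v
  simp only [mul_apply, hB, LinearMap.smul_apply, one_apply] at this
  rw [this, map_smul, hA]

end CommSemiring

/-- If `V` has dimension at least `n` and `g 1, ..., g n` are invertible endomorphisms
with `rank (g i - 1) ≤ 1` whose (ordered) product is the scalar `μ`, then either `μ = 1`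
or, for every `i`, `det (g i) = μ` (the nontrivial eigenvalue of the pseudoreflection
`g i` is `μ`) and in particular `μ` is an eigenvalue of each `g i`. -/
theorem jp_scalar_product_lemma {K V : Type*} [Field K] [AddCommGroup V] [Module K V]
    [FiniteDimensional K V] (n : ℕ) (hdim : n ≤ Module.finrank K V)
    (g : Fin n → Module.End K V) (hunit : ∀ i, IsUnit (g i))
    (hrank : ∀ i, LinearMap.rank (g i - 1) ≤ (1 : Cardinal))
    (μ : K) (hprod : (List.ofFn g).prod = μ • (1 : Module.End K V)) :
    μ = 1 ∨ ∀ i, LinearMap.det (g i) = μ ∧ Module.End.HasEigenvalue (g i) μ := by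
  refine or_iff_not_imp_left.mpr fun hμ i => ?_
  have hcard : (Finset.univ.erase i).card < Module.finrank K V := by
    rw [Finset.card_erase_of_mem (Finset.mem_univ i), Finset.card_univ, Fintype.card_fin]
    have := i.pos
    omega
  obtain ⟨v, hv0, hvfix⟩ := Module.End.exists_ne_zero_forall_apply_eq_self g
    (Finset.univ.erase i) (fun j _ => hrank j) hcard
  have hgi : g i v = μ • v := Module.End.apply_eq_smul_of_list_ofFn_prod_eq_smul hunit hprod i
    fun j hj => hvfix j (Finset.mem_erase.mpr ⟨hj, Finset.mem_univ j⟩)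
  exact ⟨Module.End.det_eq_of_rank_sub_one_le_one (hrank i) hμ hv0 hgi,
    Module.End.hasEigenvalue_of_hasEigenvector ⟨Module.End.mem_eigenspace_iff.mpr hgi, hv0⟩⟩
end

section
/- Let V be a vector space of dimension n over a field, and let g_1, ..., g_{n+1} be pseudoreflections whose product is a scalar μ ≠ 1 that is not an eigenvalue of any g_i. Then for each 1 ≤ m ≤ n, the element h = g_1 g_2 ⋯ g_m satisfies dim ker(h - 1) = n - m and dim ker(h - μ) = m - 1. -/
/-!
Split the product as `P * Q = μ • 1`, with `P = h` the first `m` factors and `Q` the remaining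
`n + 1 - m`. A product of pseudoreflections differs from `1` by rank at most the number of factors,
so `rank (P - 1) ≤ m`, and `P - μ = -P (Q - 1)` gives `rank (P - μ) ≤ n + 1 - m`; rank–nullity turns
these into the lower bounds. For the upper bounds: a fixed vector of the invertible `P` is a
`μ`-eigenvector of `Q`, and if `μ` is not an eigenvalue of `f` then `ker (f p - μ)` meets
`ker (p - 1)` trivially, so `dim ker (f p - μ) ≤ rank (p - 1)`. With `f` the first factor of `P`
resp. `Q` this gives `dim ker (P - μ) ≤ m - 1` and `dim ker (P - 1) ≤ dim ker (Q - μ) ≤ n - m`.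
-/

open Module LinearMap

section

variable {K V : Type*} [Field K] [AddCommGroup V] [Module K V]

theorem ker_sub_one_le_ker_sub_smul {P Q : End K V} {μ : K} (hP : IsUnit P)
    (hPQ : P * Q = μ • 1) : ker (P - 1) ≤ ker (Q - μ • 1) := by
  intro v hv
  simp only [mem_ker, LinearMap.sub_apply, Module.End.one_apply, sub_eq_zero,
    LinearMap.smul_apply] at hv ⊢
  apply ((Module.End.isUnit_iff P).1 hP).injective
  rw [← Module.End.mul_apply, hPQ, map_smul, hv]
  rfl

variable [FiniteDimensional K V]

theorem finrank_range_mul_sub_one_le (f g : End K V) :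
    finrank K (range (f * g - 1)) ≤ finrank K (range (f - 1)) + finrank K (range (g - 1)) := by
  have hsplit : f * g - 1 = f ∘ₗ (g - 1) + (f - 1) := by
    rw [← Module.End.mul_eq_comp, mul_sub, mul_one, sub_add_sub_cancel]
  calc finrank K (range (f * g - 1))
      ≤ finrank K (range (f ∘ₗ (g - 1))) + finrank K (range (f - 1)) := by
        rw [hsplit]
        exact (Submodule.finrank_mono (range_add_le _ _)).trans
          (Submodule.finrank_add_le_finrank_add_finrank _ _)
    _ ≤ finrank K (range (g - 1)) + finrank K (range (f - 1)) := by
        rw [range_comp]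
        gcongr
        exact Submodule.finrank_map_le _ _
    _ = _ := add_comm _ _

theorem finrank_range_list_prod_sub_one_le (l : List (End K V))
    (hl : ∀ f ∈ l, finrank K (range (f - 1)) ≤ 1) :
    finrank K (range (l.prod - 1)) ≤ l.length := by
  induction l with
  | nil => rw [List.prod_nil, sub_self, range_zero, finrank_bot]; exact le_rfl
  | cons f t ih =>
    rw [List.prod_cons, List.length_cons]
    have hf := hl f List.mem_cons_self
    have ht := ih fun x hx => hl x (List.mem_cons_of_mem _ hx)
    have := finrank_range_mul_sub_one_le f t.prod
    omega

theorem finrank_ker_mul_sub_smul_le (f p : End K V) (μ : K) :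
    finrank K (ker (f * p - μ • 1)) ≤ finrank K (ker (f - μ • 1)) + finrank K (range (p - 1)) := by
  have hinf : ker (f * p - μ • 1) ⊓ ker (p - 1) ≤ ker (f - μ • 1) := by
    rintro v ⟨hv, hpv⟩
    simp only [SetLike.mem_coe, mem_ker, LinearMap.sub_apply, Module.End.mul_apply,
      Module.End.one_apply, sub_eq_zero] at hv hpv ⊢
    rwa [hpv] at hv
  have := Submodule.finrank_sup_add_finrank_inf_eq (ker (f * p - μ • 1)) (ker (p - 1))
  have := Submodule.finrank_le (ker (f * p - μ • 1) ⊔ ker (p - 1))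
  have := finrank_range_add_finrank_ker (p - 1)
  have := Submodule.finrank_mono hinf
  omega

theorem finrank_range_sub_smul_le {P Q : End K V} {μ : K} (hPQ : P * Q = μ • 1) :
    finrank K (range (P - μ • 1)) ≤ finrank K (range (Q - 1)) := by
  have : P - μ • 1 = -(P ∘ₗ (Q - 1)) := by
    rw [← hPQ, ← Module.End.mul_eq_comp, mul_sub, mul_one, neg_sub]
  rw [this, range_neg, range_comp]
  exact Submodule.finrank_map_le _ _

theorem finrank_ker_cons_prod_sub_smul_le {f : End K V} {μ : K} (hf : ¬ f.HasEigenvalue μ)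
    (t : List (End K V)) (ht : ∀ g ∈ t, finrank K (range (g - 1)) ≤ 1) :
    finrank K (ker ((f :: t).prod - μ • 1)) ≤ t.length := by
  have hker : ker (f - μ • 1) = ⊥ := by
    rwa [Module.End.hasEigenvalue_iff, not_ne_iff, Module.End.eigenspace_def] at hf
  calc finrank K (ker ((f :: t).prod - μ • 1))
      ≤ finrank K (ker (f - μ • 1)) + finrank K (range (t.prod - 1)) :=
        finrank_ker_mul_sub_smul_le f t.prod μ
    _ ≤ t.length := by
        rw [hker, finrank_bot, zero_add]
        exact finrank_range_list_prod_sub_one_le t ht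

theorem finrank_ker_list_prod_sub_one_and_sub_smul {A B : List (End K V)} {μ : K}
    (hA : A ≠ []) (hB : B ≠ []) (hAB : A.prod * B.prod = μ • 1) (hunit : IsUnit A.prod)
    (hrank : ∀ f ∈ A ++ B, finrank K (range (f - 1)) ≤ 1)
    (heig : ∀ f ∈ A ++ B, ¬ f.HasEigenvalue μ) (hdim : finrank K V + 1 = A.length + B.length) :
    finrank K (ker (A.prod - 1)) + 1 = B.length ∧
      finrank K (ker (A.prod - μ • 1)) + 1 = A.length := by
  obtain ⟨hrankA, hrankB⟩ := List.forall_mem_append.1 hrank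
  have rankA := finrank_range_list_prod_sub_one_le A hrankA
  have rankB :=
    (finrank_range_sub_smul_le hAB).trans (finrank_range_list_prod_sub_one_le B hrankB)
  have fixA := Submodule.finrank_mono (ker_sub_one_le_ker_sub_smul hunit hAB)
  obtain ⟨f, s, rfl⟩ := List.exists_cons_of_ne_nil hA
  obtain ⟨g, t, rfl⟩ := List.exists_cons_of_ne_nil hB
  have eigA := finrank_ker_cons_prod_sub_smul_le (heig f (by simp)) s
    fun x hx => hrankA x (List.mem_cons_of_mem _ hx)
  have eigB := finrank_ker_cons_prod_sub_smul_le (heig g (by simp)) t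
    fun x hx => hrankB x (List.mem_cons_of_mem _ hx)
  have := finrank_range_add_finrank_ker ((f :: s).prod - 1)
  have := finrank_range_add_finrank_ker ((f :: s).prod - μ • 1)
  simp only [List.length_cons] at *
  omega

end

theorem jp_partial_product_eigenspaces_general {K V : Type*} [Field K] [AddCommGroup V]
    [Module K V] [FiniteDimensional K V] (n : ℕ) (hdim : Module.finrank K V = n)
    (g : Fin (n + 1) → Module.End K V) (hunit : ∀ i, IsUnit (g i))
    (hrank : ∀ i, LinearMap.rank (g i - 1) = (1 : Cardinal))
    (μ : K) (hprod : (List.ofFn g).prod = μ • (1 : Module.End K V))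
    (heig : ∀ i, ¬ Module.End.HasEigenvalue (g i) μ)
    (m : ℕ) (hm1 : 1 ≤ m) (hmn : m ≤ n) :
    let h : Module.End K V :=
      (List.ofFn fun i : Fin m => g (Fin.castLE (Nat.le_succ_of_le hmn) i)).prod
    Module.finrank K (LinearMap.ker (h - 1)) = n - m ∧
      Module.finrank K (LinearMap.ker (h - μ • 1)) = m - 1 := by
  intro h
  have hsplit := List.take_append_drop m (List.ofFn g)
  have hh : h = ((List.ofFn g).take m).prod := by
    rw [← Fin.ofFn_take_eq_take_ofFn (Nat.le_succ_of_le hmn)]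
    rfl
  have hrank' : ∀ f ∈ List.ofFn g, finrank K (range (f - 1)) ≤ 1 :=
    List.forall_mem_ofFn_iff.2 fun i => (Module.finrank_eq_of_rank_eq (by simpa using hrank i)).le
  have hunit' : IsUnit ((List.ofFn g).take m).prod :=
    List.prod_isUnit fun f hf => List.forall_mem_ofFn_iff.2 hunit f (List.mem_of_mem_take hf)
  have key := finrank_ker_list_prod_sub_one_and_sub_smul (B := (List.ofFn g).drop m)
    (by simp; omega) (by simp; omega) (by rw [← List.prod_append, hsplit, hprod])
    hunit' (by rwa [hsplit]) (by rw [hsplit]; exact List.forall_mem_ofFn_iff.2 heig)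
    (by simp [hdim]; omega)
  rw [← hh] at key
  simp only [List.length_take, List.length_drop, List.length_ofFn] at key
  omega

/-- Let `V` have dimension `n` and let `g 0, ..., g n` be pseudoreflections whose ordered
product is a scalar `μ ≠ 1` which is not an eigenvalue of any `g i`.  Then for
`1 ≤ m ≤ n`, the partial product `h = g 0 * ⋯ * g (m-1)` satisfies
`dim ker (h - 1) = n - m` and `dim ker (h - μ) = m - 1`. -/
theorem jp_partial_product_eigenspaces {K V : Type*} [Field K] [AddCommGroup V]
    [Module K V] [FiniteDimensional K V] (n : ℕ) (hdim : Module.finrank K V = n)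
    (g : Fin (n + 1) → Module.End K V) (hunit : ∀ i, IsUnit (g i))
    (hrank : ∀ i, LinearMap.rank (g i - 1) = (1 : Cardinal))
    (μ : K) (hprod : (List.ofFn g).prod = μ • (1 : Module.End K V))
    (hμ : μ ≠ 1) (heig : ∀ i, ¬ Module.End.HasEigenvalue (g i) μ)
    (m : ℕ) (hm1 : 1 ≤ m) (hmn : m ≤ n) :
    let h : Module.End K V :=
      (List.ofFn fun i : Fin m => g (Fin.castLE (Nat.le_succ_of_le hmn) i)).prod
    Module.finrank K (LinearMap.ker (h - 1)) = n - m ∧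
      Module.finrank K (LinearMap.ker (h - μ • 1)) = m - 1 :=
  jp_partial_product_eigenspaces_general n hdim g hunit hrank μ hprod heig m hm1 hmn
end

section
/- Let L/K be a quadratic field extension, V an n-dimensional L-vector space with n > 2, and g_1, ..., g_{n+1} pseudoreflections generating an irreducible subgroup whose product is the scalar λ_0 ≠ 1, with det(g_i) = λ_0 λ_i where no λ_0 λ_i equals 1. If the image of the generated group is contained (after conjugation) in L^× · GL_n(K'), for a subfield K' of L, and the nontrivial eigenvalue 1 has different multiplicity from other eigenvalues of each g_i, then all parameters λ_0 λ_i and λ_0 lie in K'. In particular if the λ_i generate L over K then K' = L. -/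
/-!
After conjugating by `P`, a generator is `h = c • M` with `M` over `K'`, and
`M - c⁻¹ • 1 = c⁻¹ • (h - 1)` has rank one. Off the diagonal this matrix agrees with `M`, so
for pairwise distinct indices `a, b, d` (here `n ≥ 3` is needed) the vanishing `2 × 2` minor
`(M a a - c⁻¹) * M b d = M a d * M b a` solves for `c⁻¹` in `K'` as soon as some off-diagonal
entry `M b d` is nonzero; if `M` is diagonal, `c⁻¹` is one of its diagonal entries. Hence every
conjugated generator has entries in `K'`, and so do its determinant `λ₀ λᵢ₊₁` and the conjugated
product `λ₀ • 1`.
-/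

open Matrix

theorem Subring.det_mem_of_mem_matrix {R n : Type*} [CommRing R] [Fintype n] [DecidableEq n]
    {S : Subring R} {M : Matrix n n R} (hM : M ∈ S.matrix) : M.det ∈ S := by
  rw [det_apply]
  exact S.sum_mem fun σ _ => S.zsmul_mem (S.prod_mem fun i _ => hM (σ i) i) _

theorem Units.list_prod_map_conj {M : Type*} [Monoid M] (u : Mˣ) (l : List M) :
    (l.map fun a => (↑u⁻¹ : M) * a * u).prod = ↑u⁻¹ * l.prod * u := by
  induction l with
  | nil => simp
  | cons a l ih => rw [List.map_cons, List.prod_cons, List.prod_cons, ih]; simp [mul_assoc]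

namespace Matrix

theorem mul_apply_eq_of_rank_le_one {m n R : Type*} [Fintype n] [CommRing R] [IsDomain R]
    {A : Matrix m n R} (hA : A.rank ≤ 1) (i k : m) (j l : n) :
    A i j * A k l = A i l * A k j := by
  by_contra h
  have hdet : (A.submatrix ![i, k] ![j, l]).det ≠ 0 := by
    rw [det_fin_two]
    simpa [sub_eq_zero] using h
  have := (rank_of_det_ne_zero hdet).symm.trans_le ((rank_submatrix_le _ _ _).trans hA)
  simp at this

theorem rank_units_conj_sub_one {n R : Type*} [Fintype n] [DecidableEq n] [CommRing R]
    (P : (Matrix n n R)ˣ) (A : Matrix n n R) :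
    ((↑P⁻¹ : Matrix n n R) * A * P - 1).rank = (A - 1).rank := by
  rw [show (↑P⁻¹ : Matrix n n R) * A * P - 1 = ↑P⁻¹ * (A - 1) * ↑P by
      rw [mul_sub, sub_mul, mul_one, P.inv_mul],
    rank_mul_eq_left_of_isUnit_det _ _ (isUnits_det_units P),
    rank_mul_eq_right_of_isUnit_det _ _ (isUnits_det_units P⁻¹)]

variable {ι F : Type*} [Fintype ι] [DecidableEq ι] [Field F]

theorem mem_of_rank_sub_smul_one_le_one {K' : Subfield F} (hι : 2 < Fintype.card ι)
    {M : Matrix ι ι F} (hM : M ∈ K'.toSubring.matrix) {x : F} (hx : (M - x • 1).rank ≤ 1) :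
    x ∈ K' := by
  have minor := mul_apply_eq_of_rank_le_one hx
  have hoff : ∀ i j, i ≠ j → (M - x • 1) i j = M i j := fun i j hij => by simp [hij]
  have hdiag : ∀ i, (M - x • 1) i i = M i i - x := fun i => by simp
  by_cases hM_offdiag : ∃ b c, b ≠ c ∧ M b c ≠ 0
  · obtain ⟨b, c, hbc, hMbc⟩ := hM_offdiag
    obtain ⟨a, -, ha⟩ := Finset.exists_mem_notMem_of_card_lt_card
      (s := {b, c}) (t := Finset.univ) (Finset.card_le_two.trans_lt hι)
    simp only [Finset.mem_insert, Finset.mem_singleton, not_or] at ha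
    have h := minor a b a c
    rw [hdiag, hoff _ _ hbc, hoff _ _ ha.2, hoff _ _ (Ne.symm ha.1)] at h
    have hx : M a c * M b a / M b c = M a a - x := by rw [div_eq_iff hMbc, h]
    rw [← sub_sub_self (M a a) x, ← hx]
    exact K'.sub_mem (hM a a) (K'.div_mem (K'.mul_mem (hM a c) (hM b a)) (hM b c))
  · push Not at hM_offdiag
    obtain ⟨a, b, hab⟩ := Fintype.exists_pair_of_one_lt_card (by omega : 1 < Fintype.card ι)
    have h := minor a b a b
    rw [hdiag, hdiag, hoff _ _ hab, hoff _ _ hab.symm, hM_offdiag _ _ hab, zero_mul] at h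
    rcases mul_eq_zero.mp h with h | h
    · exact sub_eq_zero.mp h ▸ hM a a
    · exact sub_eq_zero.mp h ▸ hM b b

theorem mem_matrix_of_isUnit_of_rank_sub_one_le_one {K' : Subfield F}
    (hι : 2 < Fintype.card ι) {h M : Matrix ι ι F} (hM : M ∈ K'.toSubring.matrix) {c : F}
    (hh : IsUnit h) (hcM : h = c • M) (hrk : (h - 1).rank ≤ 1) : h ∈ K'.toSubring.matrix := by
  have : Nonempty ι := Fintype.card_pos_iff.mp (by omega)
  have hc : c ≠ 0 := by
    rintro rfl
    exact not_isUnit_zero (zero_smul F M ▸ hcM ▸ hh)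
  have hx : (M - c⁻¹ • 1).rank ≤ 1 := by
    rwa [show M - c⁻¹ • 1 = c⁻¹ • (h - 1) by rw [hcM, smul_sub, inv_smul_smul₀ hc],
      rank_smul_of_mem_nonZeroDivisors _ (mem_nonZeroDivisors_of_ne_zero (inv_ne_zero hc))]
  have hcK : c ∈ K' := inv_inv c ▸ K'.inv_mem (mem_of_rank_sub_smul_one_le_one hι hM hx)
  exact hcM ▸ fun i j => K'.mul_mem hcK (hM i j)

end Matrix

theorem jp_not_in_smaller_field_general {L : Type*} [Field L]
    (n : ℕ) (hn : 2 < n) (K' : Subfield L)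
    (g : Fin (n + 1) → (Matrix (Fin n) (Fin n) L)ˣ)
    (lam : Fin (n + 2) → L)
    (hpseudo : ∀ i, ((g i : Matrix (Fin n) (Fin n) L) - 1).rank = 1)
    (hdet : ∀ i : Fin (n + 1), (g i : Matrix (Fin n) (Fin n) L).det = lam 0 * lam i.succ)
    (hprodg : (List.ofFn fun i => (g i : Matrix (Fin n) (Fin n) L)).prod
        = lam 0 • (1 : Matrix (Fin n) (Fin n) L))
    (hconj : ∃ P : (Matrix (Fin n) (Fin n) L)ˣ, ∀ i, ∃ (c : L) (M : Matrix (Fin n) (Fin n) L),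
      (∀ a b, M a b ∈ K') ∧
        (↑P⁻¹ : Matrix (Fin n) (Fin n) L) * (g i : Matrix (Fin n) (Fin n) L) * (↑P : Matrix (Fin n) (Fin n) L) = c • M) :
    (lam 0 ∈ K' ∧ ∀ i : Fin (n + 1), lam 0 * lam i.succ ∈ K') ∧
      (Subfield.closure (Set.range lam) = ⊤ → K' = ⊤) := by
  obtain ⟨P, hP⟩ := hconj
  have hconjK : ∀ i, ((↑(P⁻¹) : Matrix (Fin n) (Fin n) L) * g i * P) ∈ K'.toSubring.matrix := by
    intro i
    obtain ⟨c, M, hM, hcM⟩ := hP i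
    exact mem_matrix_of_isUnit_of_rank_sub_one_le_one (by simpa using hn) hM
      ((P⁻¹.isUnit.mul (g i).isUnit).mul P.isUnit) hcM
      (by rw [rank_units_conj_sub_one, hpseudo i])
  have hlam0 : lam 0 ∈ K' := by
    have hprod : ((List.ofFn fun i => (g i : Matrix (Fin n) (Fin n) L)).map
        fun A => (↑(P⁻¹) : Matrix (Fin n) (Fin n) L) * A * P).prod ∈ K'.toSubring.matrix :=
      list_prod_mem (List.forall_mem_map.mpr (List.forall_mem_ofFn_iff.mpr hconjK))
    rw [Units.list_prod_map_conj, hprodg, mul_smul_comm, mul_one, smul_mul_assoc,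
      P.inv_mul] at hprod
    simpa using hprod ⟨0, by omega⟩ ⟨0, by omega⟩
  have hdetK : ∀ i : Fin (n + 1), lam 0 * lam i.succ ∈ K' := fun i =>
    hdet i ▸ det_units_conj' P _ ▸ Subring.det_mem_of_mem_matrix (hconjK i)
  refine ⟨⟨hlam0, hdetK⟩, fun htop => top_unique (htop ▸ Subfield.closure_le.mpr ?_)⟩
  have hlam0_ne : lam 0 ≠ 0 := left_ne_zero_of_mul (hdet 0 ▸ (isUnits_det_units (g 0)).ne_zero)
  rintro _ ⟨j, rfl⟩
  cases j using Fin.cases with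
  | zero => exact hlam0
  | succ i => simpa [hlam0_ne] using K'.div_mem (hdetK i) hlam0

/-- Let `L/K` be a quadratic field extension and `g 0, ..., g n` pseudoreflections in
`GL n L` (`n > 2`) generating an irreducible group, with ordered product equal to the
scalar `λ₀ ≠ 1` and `det (g i) = λ₀ * λ (i+1)`, where the parameters multiply to `1`,
none is `1`, and no `λ₀ * λ (i+1)` is `1`.  Assume moreover that for each `g i` the
eigenvalue `1` has geometric multiplicity different from that of any other eigenvalue.
If, after conjugation, every generator is a scalar multiple of a matrix with entries in
a subfield `K'` of `L`, then `λ₀` and all `λ₀ * λ (i+1)` lie in `K'`; in particular, if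
the parameters generate `L` then `K' = L`. -/
theorem jp_not_in_smaller_field {K L : Type*} [Field K] [Field L] [Algebra K L]
    (hquad : Module.finrank K L = 2)
    (n : ℕ) (hn : 2 < n) (K' : Subfield L)
    (g : Fin (n + 1) → (Matrix (Fin n) (Fin n) L)ˣ)
    (lam : Fin (n + 2) → L)
    (hlam_ne_one : ∀ i, lam i ≠ 1)
    (hlam_prod : ∏ i, lam i = 1)
    (hpseudo : ∀ i, ((g i : Matrix (Fin n) (Fin n) L) - 1).rank = 1)
    (hdet : ∀ i : Fin (n + 1), (g i : Matrix (Fin n) (Fin n) L).det = lam 0 * lam i.succ)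
    (hprodg : (List.ofFn fun i => (g i : Matrix (Fin n) (Fin n) L)).prod
        = lam 0 • (1 : Matrix (Fin n) (Fin n) L))
    (hlam0 : lam 0 ≠ 1)
    (hlam0i : ∀ i : Fin (n + 1), lam 0 * lam i.succ ≠ 1)
    (hmult : ∀ i : Fin (n + 1), ∀ μ : L, μ ≠ 1 →
      Module.finrank L (LinearMap.ker
          ((g i : Matrix (Fin n) (Fin n) L).mulVecLin - μ • LinearMap.id)) ≠
        Module.finrank L (LinearMap.ker
          ((g i : Matrix (Fin n) (Fin n) L).mulVecLin - LinearMap.id)))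
    (hirr : ∀ W : Submodule L (Fin n → L),
      (∀ i, W.map (g i : Matrix (Fin n) (Fin n) L).mulVecLin ≤ W) → W = ⊥ ∨ W = ⊤)
    (hconj : ∃ P : (Matrix (Fin n) (Fin n) L)ˣ, ∀ i, ∃ (c : L) (M : Matrix (Fin n) (Fin n) L),
      (∀ a b, M a b ∈ K') ∧
        (↑P⁻¹ : Matrix (Fin n) (Fin n) L) * (g i : Matrix (Fin n) (Fin n) L) * (↑P : Matrix (Fin n) (Fin n) L) = c • M) :
    (lam 0 ∈ K' ∧ ∀ i : Fin (n + 1), lam 0 * lam i.succ ∈ K') ∧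
      (Subfield.closure (Set.range lam) = ⊤ → K' = ⊤) :=
  jp_not_in_smaller_field_general n hn K' g lam hpseudo hdet hprodg hconj
end

section
/- Let G be a finite group acting on a finite set X, N a normal subgroup of G, and C a coset of N in G. Then (1/|C|) Σ_{g ∈ C} |Fix(g)| equals the number of N-orbits in X that are mapped to themselves by (every, equivalently some, element of) C. -/
open scoped Pointwise

open MulAction in
private lemma burnside_aux_const {G X : Type*} [Group G] [MulAction G X]
    (N : Subgroup G) [N.Normal] (h : G) {x y : X} (hy : y ∈ orbit N x)
    (hx : h • x ∈ orbit N x) : h • y ∈ orbit N y := by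
  obtain ⟨m, rfl⟩ := hy
  obtain ⟨n, hn⟩ := hx
  have hn' : (n : G) • x = h • x := hn
  refine ⟨⟨(h * m * h⁻¹) * n * m⁻¹,
    mul_mem (mul_mem (Subgroup.Normal.conj_mem ‹N.Normal› m m.2 h) n.2) (inv_mem m.2)⟩, ?_⟩
  show ((h * m * h⁻¹) * (n : G) * (m : G)⁻¹) • ((m : G) • x) = h • ((m : G) • x)
  rw [smul_smul]
  group
  rw [mul_smul, mul_smul, hn', smul_smul, smul_smul]
  group
  rw [mul_smul]

open MulAction in
private lemma burnside_aux_card {G X : Type*} [Group G] [MulAction G X]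
    (N : Subgroup G) [N.Normal] (h : G) (x : X) (hx : h • x ∈ orbit N x) :
    Nat.card {n : N // (h * (n : G)) • x = x} = Nat.card (stabilizer N x) := by
  obtain ⟨n, hn⟩ := hx
  have hn' : (n : G) • x = h • x := hn
  have hiff : ∀ g : G, (h * g) • x = x ↔ g • x = h⁻¹ • x := fun g => by
    rw [mul_smul, smul_eq_iff_eq_inv_smul]
  set n₀ : N := ⟨h⁻¹ * (n : G)⁻¹ * h, by
    have := Subgroup.Normal.conj_mem ‹N.Normal› _ (inv_mem n.2) h⁻¹
    simpa using this⟩ with hn₀def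
  have hn₀' : (n₀ : G) • x = h⁻¹ • x := by
    show (h⁻¹ * (n : G)⁻¹ * h) • x = h⁻¹ • x
    rw [mul_smul, mul_smul, ← hn', inv_smul_smul]
  refine Nat.card_congr ?_
  refine ⟨fun p => ⟨n₀⁻¹ * p.1, ?_⟩, fun s => ⟨n₀ * s.1, ?_⟩, ?_, ?_⟩
  · have hp : (p.1 : G) • x = h⁻¹ • x := (hiff _).1 p.2
    rw [MulAction.mem_stabilizer_iff, Subgroup.smul_def]
    push_cast
    rw [mul_smul, hp, ← hn₀', inv_smul_smul]
  · have hs : (s.1 : G) • x = x := s.2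
    rw [hiff]
    push_cast
    rw [mul_smul, hs, hn₀']
  · rintro ⟨p, hp⟩; simp
  · rintro ⟨s, hs⟩; simp

open MulAction in
private lemma burnside_aux_empty {G X : Type*} [Group G] [MulAction G X]
    (N : Subgroup G) [N.Normal] (h : G) (x : X) (hx : h • x ∉ orbit N x) :
    IsEmpty {n : N // (h * (n : G)) • x = x} := by
  refine ⟨fun p => hx ?_⟩
  obtain ⟨n, hn⟩ := p
  have hnx : (n : G) • x = h⁻¹ • x := by
    rw [mul_smul, smul_eq_iff_eq_inv_smul] at hn
    exact hn
  refine ⟨⟨h * (n : G)⁻¹ * h⁻¹, by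
    simpa using Subgroup.Normal.conj_mem ‹N.Normal› _ (inv_mem n.2) h⟩, ?_⟩
  show (h * (n : G)⁻¹ * h⁻¹) • x = h • x
  rw [mul_smul, mul_smul, ← hnx, inv_smul_smul]

/-- Burnside's lemma for a coset: if a finite group `G` acts on a finite set `X`,
`N ⊴ G`, and `C = hN` is a coset of `N`, then the sum over `g ∈ C` of the number of
fixed points of `g` equals `|N|` times the number of `N`-orbits in `X` preserved by
(every element of) `C`. -/
theorem burnside_coset {G X : Type*} [Group G] [Finite G] [Finite X] [MulAction G X]
    (N : Subgroup G) [N.Normal] (h : G) :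
    (∑ᶠ n : N, (MulAction.fixedBy X (h * (n : G))).ncard)
      = Nat.card N *
        Nat.card {ω : Quotient (MulAction.orbitRel N X) //
          ∀ g : G, g ∈ (h : G) • (N : Set G) →
            ∀ x : X, Quotient.mk (MulAction.orbitRel N X) x = ω →
              Quotient.mk (MulAction.orbitRel N X) (g • x) = ω} := by
  classical
  letI : Fintype X := Fintype.ofFinite X
  letI : Fintype N := Fintype.ofFinite N
  letI : Fintype (Quotient (MulAction.orbitRel N X)) := Fintype.ofFinite _
  set Ω := Quotient (MulAction.orbitRel N X) with hΩ
  set P : Ω → Prop := fun ω =>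
    ∀ g : G, g ∈ (h : G) • (N : Set G) →
      ∀ x : X, Quotient.mk (MulAction.orbitRel N X) x = ω →
        Quotient.mk (MulAction.orbitRel N X) (g • x) = ω with hP
  have mk_eq : ∀ x y : X, (Quotient.mk (MulAction.orbitRel N X) x =
      Quotient.mk (MulAction.orbitRel N X) y) ↔ x ∈ MulAction.orbit N y := by
    intro x y
    rw [Quotient.eq]
    exact MulAction.orbitRel_apply
  have keyP : ∀ x : X, P (Quotient.mk (MulAction.orbitRel N X) x) ↔
      h • x ∈ MulAction.orbit N x := by
    intro x
    constructor
    · intro hp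
      have := hp h ⟨1, N.one_mem, by simp⟩ x rfl
      rw [mk_eq] at this
      exact this
    · intro hx g hg y hy
      obtain ⟨n, hnN, rfl⟩ := hg
      rw [mk_eq] at hy ⊢
      have h1 : h • y ∈ MulAction.orbit N y := burnside_aux_const N h hy hx
      have h2 : (h * n) • y ∈ MulAction.orbit N y := by
        obtain ⟨m, hm⟩ := h1
        have hm' : (m : G) • y = h • y := hm
        refine ⟨⟨(h * n * h⁻¹ : G), Subgroup.Normal.conj_mem ‹N.Normal› n hnN h⟩ * m, ?_⟩
        show ((h * n * h⁻¹) * (m : G)) • y = (h * n) • y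
        rw [mul_smul, hm', smul_smul]
        group
      rw [← MulAction.orbit_eq_iff.2 hy]
      exact h2
  rw [finsum_eq_sum_of_fintype]
  have step1 : ∀ n : N, (MulAction.fixedBy X (h * (n : G))).ncard
      = (Finset.univ.filter fun x : X => (h * (n : G)) • x = x).card := by
    intro n
    rw [← Nat.card_coe_set_eq, Nat.card_eq_fintype_card, ← Fintype.card_subtype]
    exact Fintype.card_congr (Equiv.subtypeEquivRight fun x => Iff.rfl)
  simp_rw [step1, Finset.card_filter]
  rw [Finset.sum_comm]
  have step2 : ∀ x : X, (∑ n : N, if (h * (n : G)) • x = x then 1 else 0)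
      = if h • x ∈ MulAction.orbit N x then Nat.card (MulAction.stabilizer N x) else 0 := by
    intro x
    rw [← Finset.card_filter]
    have hcard : (Finset.univ.filter fun n : N => (h * (n : G)) • x = x).card
        = Nat.card {n : N // (h * (n : G)) • x = x} := by
      rw [Nat.card_eq_fintype_card, Fintype.card_subtype]
    rw [hcard]
    by_cases hx : h • x ∈ MulAction.orbit N x
    · rw [if_pos hx, burnside_aux_card N h x hx]
    · rw [if_neg hx]
      haveI := burnside_aux_empty N h x hx
      simp
  simp_rw [step2]
  rw [← Finset.sum_fiberwise Finset.univ
    (fun x : X => Quotient.mk (MulAction.orbitRel N X) x)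
    (fun x : X => if h • x ∈ MulAction.orbit N x then
      Nat.card (MulAction.stabilizer N x) else 0)]
  have fibcard : ∀ (ω : Ω) (x : X), Quotient.mk (MulAction.orbitRel N X) x = ω →
      (Finset.univ.filter fun y : X =>
        Quotient.mk (MulAction.orbitRel N X) y = ω).card
        = Nat.card (MulAction.orbit N x) := by
    intro ω x hx
    rw [Nat.card_eq_fintype_card, ← Set.toFinset_card]
    congr 1
    ext y
    simp only [Set.mem_toFinset, Finset.mem_filter, Finset.mem_univ, true_and]
    rw [← hx, mk_eq]
  have step3 : ∀ ω : Ω,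
      (∑ x ∈ Finset.univ.filter fun x : X =>
          Quotient.mk (MulAction.orbitRel N X) x = ω,
        if h • x ∈ MulAction.orbit N x then Nat.card (MulAction.stabilizer N x) else 0)
      = if P ω then Nat.card N else 0 := by
    intro ω
    by_cases hω : P ω
    · rw [if_pos hω]
      have hfib : ∀ x ∈ Finset.univ.filter fun x : X =>
          Quotient.mk (MulAction.orbitRel N X) x = ω,
          (if h • x ∈ MulAction.orbit N x then Nat.card (MulAction.stabilizer N x) else 0)
            = Nat.card N / (Finset.univ.filter fun y : X =>
                Quotient.mk (MulAction.orbitRel N X) y = ω).card := by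
        intro x hx
        rw [Finset.mem_filter] at hx
        have hQ : h • x ∈ MulAction.orbit N x := (keyP x).1 (hx.2 ▸ hω)
        rw [if_pos hQ, fibcard ω x hx.2]
        have horb := MulAction.card_orbit_mul_card_stabilizer_eq_card_group N x
        haveI : Nonempty (MulAction.orbit N x) := ⟨⟨x, MulAction.mem_orbit_self x⟩⟩
        rw [Nat.card_eq_fintype_card, Nat.card_eq_fintype_card, Nat.card_eq_fintype_card]
        exact (Nat.div_eq_of_eq_mul_left Fintype.card_pos (by rw [← horb, mul_comm])).symm
      rw [Finset.sum_congr rfl hfib, Finset.sum_const, smul_eq_mul]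
      have hdvd : (Finset.univ.filter fun y : X =>
          Quotient.mk (MulAction.orbitRel N X) y = ω).card ∣ Nat.card N := by
        rw [fibcard ω ω.out (Quotient.out_eq ω)]
        refine ⟨Nat.card (MulAction.stabilizer N ω.out), ?_⟩
        rw [Nat.card_eq_fintype_card, Nat.card_eq_fintype_card, Nat.card_eq_fintype_card]
        exact (MulAction.card_orbit_mul_card_stabilizer_eq_card_group N ω.out).symm
      exact Nat.mul_div_cancel' hdvd
    · rw [if_neg hω]
      refine Finset.sum_eq_zero fun x hx => ?_
      rw [Finset.mem_filter] at hx
      have hnot : ¬ h • x ∈ MulAction.orbit N x := fun hQ => hω (hx.2 ▸ (keyP x).2 hQ)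
      rw [if_neg hnot]
  simp_rw [step3]
  rw [← Finset.sum_filter, Finset.sum_const, smul_eq_mul,
    Nat.card_eq_fintype_card (α := {ω : Ω // P ω}), Fintype.card_subtype]
  ring
end
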